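/- arXiv:2411.05132 — 4 statements merged into one kernel-verified Lean document; each statement's English description precedes it below -/
import Mathlib

section
/- Let ℓ and ℓ̃ be discretely conformally equivalent metrics on a simplicial surface with boundary, related by vertex scale factors u : V → ℝ. Then ℓ and ℓ̃ have equal length half cross ratios on every boundary edge if and only if u is locally constant on the boundary (i.e., constant on each connected component of the boundary). -/
/-!
Conformal scaling multiplies the ratio `ℓ_{jk}/ℓ_{ki}` by `exp ((u_j - u_i)/2)`, because the
factor `exp (u_k/2)` is common to both edges; so the ratio is unchanged iff `u_j = u_i`.
-/

open Real

theorem exp_half_add_mul_div_exp_half_add_mul (a b c x y : ℝ) :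
    exp ((a + c) / 2) * x / (exp ((c + b) / 2) * y) = exp ((a - b) / 2) * (x / y) := by
  rw [mul_div_mul_comm, ← exp_sub]
  ring_nf

theorem eq_exp_mul_self_iff {x : ℝ} (hx : x ≠ 0) (t : ℝ) : x = exp t * x ↔ t = 0 := by
  rw [eq_comm, mul_eq_right₀ hx, exp_eq_one_iff]

theorem lhcr_eq_iff_locally_constant_boundary_scale_general
    {V E Bd : Type*} (ends : E → V × V)
    (bi bj bk : Bd → V) (ejk eki : Bd → E)
    (hjk : ∀ b, ends (ejk b) = (bj b, bk b))
    (hki : ∀ b, ends (eki b) = (bk b, bi b))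
    (ℓ ℓt : E → ℝ) (hℓ : ∀ e, 0 < ℓ e)
    (u : V → ℝ)
    (hconf : ∀ e, ℓt e = Real.exp ((u (ends e).1 + u (ends e).2) / 2) * ℓ e) :
    (∀ b, ℓ (ejk b) / ℓ (eki b) = ℓt (ejk b) / ℓt (eki b))
      ↔ ∀ b, u (bj b) - u (bi b) = 0 := by
  refine forall_congr' fun b => ?_
  rw [hconf (ejk b), hconf (eki b), hjk, hki, exp_half_add_mul_div_exp_half_add_mul,
    eq_exp_mul_self_iff (div_pos (hℓ _) (hℓ _)).ne', div_eq_zero_iff]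
  norm_num

/-- two discretely conformally equivalent metrics (related by
vertex scale factors `u`) have equal length half cross ratios on every
boundary edge iff `u` is locally constant on the boundary, i.e. `du = 0`
on every boundary edge. Boundary edges are indexed by `Bd`, where the
boundary edge `b` goes from vertex `bi b` to `bj b`, its unique adjacent
face is `(bi b, bj b, bk b)`, and `ejk b`, `eki b` are the two remaining
edges of that face. -/
theorem lhcr_eq_iff_locally_constant_boundary_scale
    {V E Bd : Type*} (ends : E → V × V)
    (bi bj bk : Bd → V) (ejk eki : Bd → E)
    (hjk : ∀ b, ends (ejk b) = (bj b, bk b))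
    (hki : ∀ b, ends (eki b) = (bk b, bi b))
    (ℓ ℓt : E → ℝ) (hℓ : ∀ e, 0 < ℓ e) (hℓt : ∀ e, 0 < ℓt e)
    (u : V → ℝ)
    (hconf : ∀ e, ℓt e = Real.exp ((u (ends e).1 + u (ends e).2) / 2) * ℓ e) :
    (∀ b, ℓ (ejk b) / ℓ (eki b) = ℓt (ejk b) / ℓt (eki b))
      ↔ ∀ b, u (bj b) - u (bi b) = 0 :=
  lhcr_eq_iff_locally_constant_boundary_scale_general ends bi bj bk ejk eki hjk hki ℓ ℓt hℓ u hconf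
end

section
/- For three points f_i, f_j, f_k ∈ ℝ³ in general position (not collinear), the quaternionic product of the normalized edge vectors (f_j−f_i)/|f_j−f_i| · (f_k−f_j)/|f_k−f_j| · (f_i−f_k)/|f_i−f_k| is a purely imaginary unit quaternion, equal to the unit tangent vector at f_i of the oriented circumcircle through f_i, f_j, f_k. -/
/-- Normalization `x̂ = x/|x|` of a quaternion. -/
noncomputable def qn (x : Quaternion ℝ) : Quaternion ℝ := ‖x‖⁻¹ • x

/-- Cross product of (imaginary) quaternions: `x × y = (xy − yx)/2`. -/
noncomputable def qcross (x y : Quaternion ℝ) : Quaternion ℝ := (x * y - y * x) / 2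

lemma keyprod (u v : Quaternion ℝ) (hu : u.re = 0) (hv : v.re = 0) :
    u * (v - u) * (-v) = (Quaternion.normSq v : ℝ) • u - (Quaternion.normSq u : ℝ) • v := by
  ext <;>
    simp [Quaternion.re_mul, Quaternion.imI_mul, Quaternion.imJ_mul, Quaternion.imK_mul,
      Quaternion.normSq_def', hu, hv] <;> ring

lemma qcross_eq (x y : Quaternion ℝ) : qcross x y = (2⁻¹ : ℝ) • (x * y - y * x) := by
  have h2 : (2 : Quaternion ℝ) = ((2:ℝ) : Quaternion ℝ) := by norm_cast
  rw [qcross, div_eq_mul_inv, h2, ← Quaternion.coe_inv, Quaternion.mul_coe_eq_smul]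

lemma Tform (u v : Quaternion ℝ) (hu : u.re = 0) (hv : v.re = 0) (α β : ℝ) :
    (inner ℝ ((Quaternion.normSq v : ℝ) • u - (Quaternion.normSq u : ℝ) • v)
      (qcross (qcross u v) (-(α • u + β • v))) : ℝ)
    = (Quaternion.normSq u * Quaternion.normSq v - (inner ℝ u v : ℝ)^2)
        * (α * Quaternion.normSq u + β * Quaternion.normSq v) := by
  simp only [qcross_eq, Quaternion.inner_def, Quaternion.normSq_def', smul_mul_assoc,
    mul_smul_comm, smul_sub, smul_add, smul_smul, neg_mul, mul_neg, star_sub, star_smul,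
    star_add, star_neg]
  simp [Quaternion.re_mul, Quaternion.imI_mul, Quaternion.imJ_mul, Quaternion.imK_mul, hu, hv]
  ring

lemma norm_qn (x : Quaternion ℝ) (hx : x ≠ 0) : ‖qn x‖ = 1 := by
  rw [qn, norm_smul, norm_inv, norm_norm]
  exact inv_mul_cancel₀ (norm_ne_zero_iff.mpr hx)

/-- for three non-collinear points `fi, fj, fk ∈ ℝ³`
(imaginary quaternions), the quaternionic product of the normalized edge
vectors is a purely imaginary unit quaternion equal to the unit tangent at
`fi` of the circumcircle through `fi, fj, fk`, oriented by this order.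
Concretely: the product `p` has zero real part and unit norm, lies in the
plane of the triangle, and for any circumcenter `c` (equidistant from the
three points and lying in their plane) `p` is orthogonal to the radius
`fi − c` and positively aligned with `ν × (fi − c)`, where
`ν = (fj−fi) × (fk−fi)` is the oriented plane normal. -/
theorem product_of_normalized_edges_is_circumcircle_tangent
    (fi fj fk : Quaternion ℝ)
    (hfi : fi.re = 0) (hfj : fj.re = 0) (hfk : fk.re = 0)
    (hncol : LinearIndependent ℝ ![fj - fi, fk - fi]) :
    (qn (fj - fi) * qn (fk - fj) * qn (fi - fk)).re = 0 ∧
    ‖qn (fj - fi) * qn (fk - fj) * qn (fi - fk)‖ = 1 ∧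
    (qn (fj - fi) * qn (fk - fj) * qn (fi - fk))
      ∈ Submodule.span ℝ ({fj - fi, fk - fi} : Set (Quaternion ℝ)) ∧
    ∀ c : Quaternion ℝ, c.re = 0 →
      ‖fi - c‖ = ‖fj - c‖ → ‖fj - c‖ = ‖fk - c‖ →
      (c - fi) ∈ Submodule.span ℝ ({fj - fi, fk - fi} : Set (Quaternion ℝ)) →
      (inner ℝ (qn (fj - fi) * qn (fk - fj) * qn (fi - fk)) (fi - c) : ℝ) = 0 ∧
      0 < (inner ℝ (qn (fj - fi) * qn (fk - fj) * qn (fi - fk))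
            (qcross (qcross (fj - fi) (fk - fi)) (fi - c)) : ℝ) := by
  set u := fj - fi with hu_def
  set v := fk - fi with hv_def
  have hure : u.re = 0 := by rw [hu_def]; simp [hfi, hfj]
  have hvre : v.re = 0 := by rw [hv_def]; simp [hfi, hfk]
  have hb : fk - fj = v - u := by rw [hu_def, hv_def]; abel
  have hd : fi - fk = -v := by rw [hv_def]; abel
  have hune : u ≠ 0 := by simpa using hncol.ne_zero 0
  have hvne : v ≠ 0 := by simpa using hncol.ne_zero 1
  have huvne : u ≠ v := by
    intro h
    have h01 : (![u, v] : Fin 2 → Quaternion ℝ) 0 = ![u, v] 1 := by simp [h]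
    exact absurd (hncol.injective h01) (by decide)
  have hbne : v - u ≠ 0 := sub_ne_zero.mpr (Ne.symm huvne)
  have hdne : (-v : Quaternion ℝ) ≠ 0 := neg_ne_zero.mpr hvne
  set t : ℝ := ‖u‖⁻¹ * (‖v - u‖⁻¹ * ‖(-v : Quaternion ℝ)‖⁻¹) with ht_def
  have htpos : 0 < t := by
    rw [ht_def]
    have h1 := norm_pos_iff.mpr hune
    have h2 := norm_pos_iff.mpr hbne
    have h3 := norm_pos_iff.mpr hdne
    positivity
  have hprod : qn u * qn (fk - fj) * qn (fi - fk)
      = t • ((Quaternion.normSq v : ℝ) • u - (Quaternion.normSq u : ℝ) • v) := by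
    rw [hb, hd, ← keyprod u v hure hvre, qn, qn, qn, ht_def]
    simp only [smul_mul_assoc, mul_smul_comm, smul_smul]
    match_scalars
    ring
  refine ⟨?_, ?_, ?_, ?_⟩
  · rw [hprod]
    simp [Quaternion.re_smul, Quaternion.re_sub, hure, hvre]
  · rw [norm_mul, norm_mul, norm_qn u hune, norm_qn _ (by rw [hb]; exact hbne),
      norm_qn _ (by rw [hd]; exact hdne)]
    norm_num
  · rw [hprod]
    refine Submodule.smul_mem _ _ (sub_mem (Submodule.smul_mem _ _ ?_) (Submodule.smul_mem _ _ ?_))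
    · exact Submodule.subset_span (Set.mem_insert _ _)
    · exact Submodule.subset_span (Set.mem_insert_of_mem _ rfl)
  · intro c hc h1 h2 hspan
    obtain ⟨α, β, hr⟩ := Submodule.mem_span_pair.mp hspan
    have hfic : fi - c = -(α • u + β • v) := by rw [hr]; abel
    have hnu : ‖u‖ ^ 2 = Quaternion.normSq u := by
      rw [Quaternion.normSq_eq_norm_mul_self, sq]
    have hnv : ‖v‖ ^ 2 = Quaternion.normSq v := by
      rw [Quaternion.normSq_eq_norm_mul_self, sq]
    have hur : (inner ℝ u (fi - c) : ℝ) = -(Quaternion.normSq u) / 2 := by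
      have e1 : fj - c = u + (fi - c) := by rw [hu_def]; abel
      have e2 : ‖fi - c‖ ^ 2 = ‖u + (fi - c)‖ ^ 2 := by rw [← e1, h1]
      rw [norm_add_sq_real] at e2
      linarith [hnu]
    have hvr : (inner ℝ v (fi - c) : ℝ) = -(Quaternion.normSq v) / 2 := by
      have e1 : fk - c = v + (fi - c) := by rw [hv_def]; abel
      have e2 : ‖fi - c‖ ^ 2 = ‖v + (fi - c)‖ ^ 2 := by rw [← e1, h1, h2]
      rw [norm_add_sq_real] at e2
      linarith [hnv]
    have hinner_r : ∀ w : Quaternion ℝ, (inner ℝ w (fi - c) : ℝ)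
        = -(α * (inner ℝ w u : ℝ) + β * (inner ℝ w v : ℝ)) := by
      intro w
      rw [hfic, inner_neg_right, inner_add_right, real_inner_smul_right, real_inner_smul_right]
    have hE1 : α * (Quaternion.normSq u : ℝ) + β * (inner ℝ u v : ℝ)
        = Quaternion.normSq u / 2 := by
      have := hinner_r u
      rw [hur, Quaternion.inner_self] at this
      linarith
    have hE2 : α * (inner ℝ u v : ℝ) + β * (Quaternion.normSq v : ℝ)
        = Quaternion.normSq v / 2 := by
      have := hinner_r v
      rw [hvr, Quaternion.inner_self, real_inner_comm u v] at this
      linarith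
    constructor
    · rw [hprod, real_inner_smul_left]
      refine mul_eq_zero_of_right _ ?_
      rw [inner_sub_left, real_inner_smul_left, real_inner_smul_left, hur, hvr]
      ring
    · rw [hprod, real_inner_smul_left, hfic]
      refine mul_pos htpos ?_
      rw [Tform u v hure hvre α β]
      have key : ((Quaternion.normSq u : ℝ) * Quaternion.normSq v - (inner ℝ u v : ℝ) ^ 2)
          * (α * Quaternion.normSq u + β * Quaternion.normSq v)
          = (Quaternion.normSq u * Quaternion.normSq v / 2)
            * (Quaternion.normSq u + Quaternion.normSq v - 2 * (inner ℝ u v : ℝ)) := by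
        linear_combination ((Quaternion.normSq v : ℝ) * (Quaternion.normSq u - (inner ℝ u v : ℝ))) * hE1
          + ((Quaternion.normSq u : ℝ) * (Quaternion.normSq v - (inner ℝ u v : ℝ))) * hE2
      rw [key]
      have hNu : (0:ℝ) < Quaternion.normSq u := by
        rw [← hnu]; exact pow_pos (norm_pos_iff.mpr hune) 2
      have hNv : (0:ℝ) < Quaternion.normSq v := by
        rw [← hnv]; exact pow_pos (norm_pos_iff.mpr hvne) 2
      have hNd : (0:ℝ) < Quaternion.normSq u + Quaternion.normSq v - 2 * (inner ℝ u v : ℝ) := by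
        have h3 : (0:ℝ) < (inner ℝ (u - v) (u - v) : ℝ) := by
          rw [real_inner_self_eq_norm_sq]
          exact pow_pos (norm_pos_iff.mpr (sub_ne_zero.mpr huvne)) 2
        rw [real_inner_sub_sub_self, Quaternion.inner_self, Quaternion.inner_self] at h3
        linarith [real_inner_comm u v]
      positivity
end

section
/- Let a, b, c, d ∈ ℝ³ \ {0} with β = β(a,b,c,d) defined by cos β = −Re(â b̂ ĉ d̂), and suppose sin β ≠ 0. Then for a variation ȧ of a (with b, c, d fixed), the derivative of β satisfies −sin(β) β̇ = ⟨a⁻¹ × Im(â b̂ ĉ d̂), ȧ⟩, where a⁻¹ = −a/|a|² and Im denotes the imaginary part of the quaternionic product. -/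
/-- Quaternionic inverse of a vector: `x⁻¹ = −x/|x|²`. -/
noncomputable def qinv (x : Quaternion ℝ) : Quaternion ℝ := (-(‖x‖ ^ 2)⁻¹) • x

lemma norm_sq_eq (u : Quaternion ℝ) : ‖u‖ ^ 2 = u.re^2 + u.imI^2 + u.imJ^2 + u.imK^2 := by
  rw [sq, ← Quaternion.normSq_eq_norm_mul_self]
  simp [Quaternion.normSq_def']
  try ring

lemma key (u v q : Quaternion ℝ) (hu : u.re = 0) (hv : v.re = 0) (hu0 : u ≠ 0) :
    (inner ℝ (qcross (qinv u) ((qn u * q).im)) v : ℝ) =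
    -((-(‖u‖⁻¹ * inner ℝ u v / ‖u‖ ^ 2)) * (u * q).re + ‖u‖⁻¹ * (v * q).re) := by
  have hn : ‖u‖ ≠ 0 := norm_ne_zero_iff.2 hu0
  have hn2 := norm_sq_eq u
  rw [hu] at hn2
  set n := ‖u‖ with hndef
  simp only [qcross, qinv, qn, Quaternion.inner_def, div_eq_mul_inv]
  have h2 : ((2 : Quaternion ℝ))⁻¹ = ((2⁻¹ : ℝ) : Quaternion ℝ) := by
    rw [Quaternion.coe_inv, show (2:ℝ) = ((2:ℕ):ℝ) by norm_num, Quaternion.coe_natCast]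
    norm_num
  rw [h2]
  simp only [Quaternion.re_mul, Quaternion.imI_mul, Quaternion.imJ_mul, Quaternion.imK_mul,
    Quaternion.re_smul, Quaternion.re_sub, Quaternion.imI_sub, Quaternion.imJ_sub,
    Quaternion.imK_sub, Quaternion.imI_smul, Quaternion.imJ_smul, Quaternion.imK_smul,
    Quaternion.re_im, Quaternion.imI_im, Quaternion.imJ_im, Quaternion.imK_im,
    Quaternion.re_star, Quaternion.imI_star, Quaternion.imJ_star, Quaternion.imK_star,
    Quaternion.re_coe, Quaternion.imI_coe, Quaternion.imJ_coe, Quaternion.imK_coe,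
    smul_eq_mul, hu, hv]
  field_simp
  ring_nf
  linear_combination (-2 * n^3 * (q.imI*v.imI + q.imJ*v.imJ + q.imK*v.imK)) * hn2

/-- variation of the angle `β(a,b,c,d)` defined by
`cos β = −Re(â b̂ ĉ d̂)` under a variation `ȧ` of `a` (with `b,c,d` fixed):
`−sin(β) β̇ = ⟨a⁻¹ × Im(â b̂ ĉ d̂), ȧ⟩`, i.e.
`β̇ = −(sin β)⁻¹ ⟨a⁻¹ × Im(â b̂ ĉ d̂), ȧ⟩`, provided `sin β ≠ 0`. -/
theorem beta_variation
    (b c d : Quaternion ℝ) (hb : b ≠ 0) (hc : c ≠ 0) (hd : d ≠ 0)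
    (hib : b.re = 0) (hic : c.re = 0) (hid : d.re = 0)
    (a : ℝ → Quaternion ℝ) (a' : Quaternion ℝ) (t0 : ℝ)
    (hia : ∀ t, (a t).re = 0) (ha0 : a t0 ≠ 0)
    (hda : HasDerivAt a a' t0)
    (hsin : Real.sin
      (Real.arccos (-(qn (a t0) * qn b * qn c * qn d).re)) ≠ 0) :
    HasDerivAt
      (fun t => Real.arccos (-(qn (a t) * qn b * qn c * qn d).re))
      (-(Real.sin (Real.arccos (-(qn (a t0) * qn b * qn c * qn d).re)))⁻¹
        * (inner ℝ (qcross (qinv (a t0)) ((qn (a t0) * qn b * qn c * qn d).im))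
            a' : ℝ))
      t0 := by
  set q : Quaternion ℝ := qn b * qn c * qn d with hq
  set u : Quaternion ℝ := a t0 with hu
  have hn : ‖u‖ ≠ 0 := norm_ne_zero_iff.2 ha0
  have hre : ∀ x : Quaternion ℝ, (inner ℝ x (1 : Quaternion ℝ) : ℝ) = x.re := by
    intro x; simp [Quaternion.inner_def]
  -- a' is imaginary
  have hva : a'.re = 0 := by
    have h1 : HasDerivAt (fun t => (inner ℝ (a t) (1 : Quaternion ℝ) : ℝ))
        ((inner ℝ u (0 : Quaternion ℝ) : ℝ) + (inner ℝ a' (1 : Quaternion ℝ) : ℝ)) t0 :=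
      hda.inner ℝ (hasDerivAt_const t0 1)
    have h2 : (fun t => (inner ℝ (a t) (1 : Quaternion ℝ) : ℝ)) = fun _ => 0 := by
      funext t; rw [hre]; exact hia t
    rw [h2] at h1
    have h3 := (hasDerivAt_const t0 (0 : ℝ)).unique h1
    simpa [hre] using h3.symm
  -- derivative of the norm
  have hNsq : HasDerivAt (fun t => ‖a t‖ ^ 2) (2 * (inner ℝ u a' : ℝ)) t0 := hda.norm_sq
  have hsqpos : (0 : ℝ) < ‖u‖ ^ 2 := by positivity
  have hN0 : HasDerivAt (fun t => Real.sqrt (‖a t‖ ^ 2))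
      (1 / (2 * Real.sqrt (‖u‖ ^ 2)) * (2 * (inner ℝ u a' : ℝ))) t0 :=
    (Real.hasDerivAt_sqrt hsqpos.ne').comp t0 hNsq
  have hN : HasDerivAt (fun t => ‖a t‖) (‖u‖⁻¹ * (inner ℝ u a' : ℝ)) t0 := by
    have heq : (fun t => Real.sqrt (‖a t‖ ^ 2)) = fun t => ‖a t‖ := by
      funext t; exact Real.sqrt_sq (norm_nonneg _)
    rw [heq] at hN0
    convert hN0 using 1
    rw [Real.sqrt_sq (norm_nonneg _)]
    field_simp
    try ring
  -- derivative of the re part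
  have hH : HasDerivAt (fun t => ((a t) * q).re) ((a' * q).re) t0 := by
    have h1 : HasDerivAt (fun t => (a t) * q) (a' * q) t0 := hda.mul_const q
    have h2 := h1.inner ℝ (hasDerivAt_const t0 (1 : Quaternion ℝ))
    simpa [hre] using h2
  have hInv : HasDerivAt (fun t => (‖a t‖)⁻¹)
      (-(‖u‖⁻¹ * (inner ℝ u a' : ℝ)) / ‖u‖ ^ 2) t0 := hN.inv hn
  have hF : HasDerivAt (fun t => -((‖a t‖)⁻¹ * ((a t) * q).re))
      (-((-(‖u‖⁻¹ * (inner ℝ u a' : ℝ)) / ‖u‖ ^ 2) * (u * q).re + ‖u‖⁻¹ * (a' * q).re)) t0 :=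
    (hInv.mul hH).neg
  -- rewriting of the angle function
  have hkey : ∀ t, (qn (a t) * qn b * qn c * qn d).re = ‖a t‖⁻¹ * ((a t) * q).re := by
    intro t
    rw [hq]
    simp [qn, smul_mul_assoc, mul_assoc, Quaternion.re_smul, smul_eq_mul]
    try ring
  have hx0e : -(qn u * qn b * qn c * qn d).re = -(‖u‖⁻¹ * (u * q).re) := by
    rw [hu, hkey t0]
  rw [hx0e] at hsin
  have hs : Real.sqrt (1 - (-(‖u‖⁻¹ * (u * q).re)) ^ 2) ≠ 0 := by
    rwa [Real.sin_arccos] at hsin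
  have h₁ : -(‖u‖⁻¹ * (u * q).re) ≠ -1 := by
    intro h; apply hs; rw [h]; norm_num
  have h₂ : -(‖u‖⁻¹ * (u * q).re) ≠ 1 := by
    intro h; apply hs; rw [h]; norm_num
  have hA := (Real.hasDerivAt_arccos h₁ h₂).comp t0 hF
  have hfun : (fun t => Real.arccos (-(qn (a t) * qn b * qn c * qn d).re))
      = fun t => Real.arccos (-((‖a t‖)⁻¹ * ((a t) * q).re)) := by
    funext t; rw [hkey t]
  rw [hfun, hx0e]
  have him : qn u * qn b * qn c * qn d = qn u * q := by
    rw [hq]; noncomm_ring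
  rw [him]
  refine hA.congr_deriv ?_
  rw [Real.sin_arccos, key u a' q (hia t0) hva ha0]
  ring
end

section
/- Scaling conservation law (discrete): with τ the Willmore flux dual 1-form satisfying ⟨τ_{ij}, df_{ij}⟩ = 0 on every edge and dτ = grad W, the dual 1-form σ_{ij} = ⟨f_{ij}, τ_{ij}⟩ (where f_{ij} = (f_i+f_j)/2) satisfies (dσ)_i = ⟨f_i, (grad W)_i⟩ at every vertex i. -/
open Finset

/-- scaling conservation law.  Given the Willmore flux dual
1-form `τ` (halfedge-valued, with `τ_{ij}` orthogonal to the edge vector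
`df_{ij} = f_j − f_i`) satisfying `dτ = grad W`, the dual 1-form
`σ_{ij} = ⟨f_{ij}, τ_{ij}⟩` with `f_{ij} = (f_i + f_j)/2` satisfies
`(dσ)_i = ⟨f_i, (grad W)_i⟩` at every vertex `i`.  Here `N i` is the set of
neighbors of `i` and dual exterior derivatives are sums over incident
edges. -/
theorem scaling_conservation_law
    {V : Type*} (N : V → Finset V)
    (f : V → EuclideanSpace ℝ (Fin 3))
    (τ : V → V → EuclideanSpace ℝ (Fin 3))
    (gradW : V → EuclideanSpace ℝ (Fin 3))
    (horth : ∀ i j, (inner ℝ (τ i j) (f j - f i) : ℝ) = 0)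
    (hdτ : ∀ i, ∑ j ∈ N i, τ i j = gradW i) :
    ∀ i, ∑ j ∈ N i, (inner ℝ ((1 / 2 : ℝ) • (f i + f j)) (τ i j) : ℝ)
      = (inner ℝ (f i) (gradW i) : ℝ) := by
  intro i
  rw [← hdτ i, inner_sum]
  refine Finset.sum_congr rfl fun j _ => ?_
  have h := horth i j
  rw [real_inner_comm] at h
  have : (1 / 2 : ℝ) • (f i + f j) = f i + (1 / 2 : ℝ) • (f j - f i) := by
    module
  rw [this, inner_add_left, inner_smul_left, h]
  simp
end
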